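/- arXiv:1605.01371 — 3 statements merged into one kernel-verified Lean document; each statement's English description precedes it below -/
import Mathlib

section
/- (Lucas) If p is a prime dividing the Fermat number F_n = 2^(2^n) + 1 with n ≥ 2, then p ≡ 1 (mod 2^(n+2)). -/
theorem lucas_fermat_divisor (n p : ℕ) (hn : 2 ≤ n) (hp : p.Prime)
    (hdvd : p ∣ 2 ^ 2 ^ n + 1) : p % 2 ^ (n + 2) = 1 := by
  obtain ⟨k, rfl⟩ := Nat.fermat_primeFactors_one_lt n p hn hp hdvd
  rw [Nat.mul_add_mod_self_right]
  exact Nat.one_mod_eq_one.mpr (Nat.one_lt_two_pow (by omega)).ne'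
end

section
/- Every prime divisor of the Fermat number F_n with n ≥ 2 is of the form k·2^(n+2) + 1 for some positive integer k. -/
theorem fermat_divisor_form (n p : ℕ) (hn : 2 ≤ n) (hp : p.Prime)
    (hdvd : p ∣ 2 ^ 2 ^ n + 1) : ∃ k : ℕ, 0 < k ∧ p = k * 2 ^ (n + 2) + 1 := by
  obtain ⟨k, rfl⟩ := Nat.fermat_primeFactors_one_lt n p hn hp hdvd
  refine ⟨k, Nat.pos_of_ne_zero ?_, rfl⟩
  rintro rfl
  exact Nat.not_prime_one (by simpa using hp)
end

section
/- If p is an odd prime dividing a Fermat number F_n with n ≥ 2, then 2 is a quadratic residue modulo p. -/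
/-! Modulo `p`, the residue of `a` has order `2 ^ (n + 1)`, which therefore divides `p - 1`;
for `n ≥ 2` this gives `p ≡ 1 [MOD 8]`, and the second supplementary law of quadratic
reciprocity makes `2` a square. -/

theorem Nat.Prime.mod_eight_eq_one_of_dvd_pow_two_pow_add_one {a n p : ℕ} (hp : p.Prime)
    (hp2 : p ≠ 2) (hn : 2 ≤ n) (hdvd : p ∣ a ^ 2 ^ n + 1) : p % 8 = 1 := by
  obtain ⟨k, rfl⟩ := Nat.pow_pow_add_primeFactors_one_lt hp hp2 hdvd
  obtain ⟨m, hm⟩ : 8 ∣ 2 ^ (n + 1) := pow_dvd_pow 2 (by omega : 3 ≤ n + 1)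
  rw [hm, show k * (8 * m) + 1 = 8 * (k * m) + 1 by ring]
  omega

theorem two_is_qr_mod_fermat_divisor_general (n p : ℕ) (hn : 2 ≤ n) (hp : p.Prime)
    (hdvd : p ∣ 2 ^ 2 ^ n + 1) : IsSquare (2 : ZMod p) := by
  have : Fact p.Prime := ⟨hp⟩
  have hp2 : p ≠ 2 := (Nat.odd_fermatNumber n).ne_two_of_dvd_nat hdvd
  exact (ZMod.exists_sq_eq_two_iff hp2).mpr
    (Or.inl (hp.mod_eight_eq_one_of_dvd_pow_two_pow_add_one hp2 hn hdvd))

theorem two_is_qr_mod_fermat_divisor (n p : ℕ) (hn : 2 ≤ n) (hp : p.Prime)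
    (hodd : Odd p) (hdvd : p ∣ 2 ^ 2 ^ n + 1) : IsSquare (2 : ZMod p) :=
  two_is_qr_mod_fermat_divisor_general n p hn hp hdvd
end
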